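/- arXiv:1801.09526 — 2 statements merged into one kernel-verified Lean document; each statement's English description precedes it below -/
import Mathlib

section
/- Let n = 2b, let Φ be an n×n real matrix, and let X̂ = X̂₁ × ⋯ × X̂_b be a decomposed set with each X̂_j ⊆ ℝ² nonempty, compact, and convex. Then the image of X̂ under Φ is contained in the decomposed image: Φ X̂ ⊆ X̂', where X̂'_i = Φ_{i1}X̂₁ ⊕ ⋯ ⊕ Φ_{ib}X̂_b and X̂' = X̂'₁ × ⋯ × X̂'_b. -/
open Set Pointwise Matrix

noncomputable section

/-- The `p`-norm on `ι → ℝ`. -/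
def pnorm {ι : Type} [Fintype ι] (p : ℝ) (x : ι → ℝ) : ℝ :=
  (∑ i, |x i| ^ p) ^ (1 / p)

/-- Dot product. -/
def dotp {ι : Type} [Fintype ι] (x y : ι → ℝ) : ℝ := ∑ i, x i * y i

/-- Support function of a set. -/
def suppF {ι : Type} [Fintype ι] (X : Set (ι → ℝ)) (ℓ : ι → ℝ) : ℝ :=
  sSup (dotp ℓ '' X)

/-- Closed unit ball of the `p`-norm. -/
def pball (ι : Type) [Fintype ι] (p : ℝ) : Set (ι → ℝ) := {x | pnorm p x ≤ 1}

/-- Hausdorff distance with respect to the `p`-norm. -/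
def hausP {ι : Type} [Fintype ι] (p : ℝ) (X Y : Set (ι → ℝ)) : ℝ :=
  sInf {ε | 0 ≤ ε ∧ X ⊆ Y + ε • pball ι p ∧ Y ⊆ X + ε • pball ι p}

/-- Image of a set under a matrix. -/
def mapSet {ι κ : Type} [Fintype ι] [Fintype κ] (M : Matrix ι κ ℝ) (S : Set (κ → ℝ)) :
    Set (ι → ℝ) := M.mulVec '' S

/-- Induced matrix `p`-norm. -/
def matP {ι κ : Type} [Fintype ι] [Fintype κ] (p : ℝ) (M : Matrix ι κ ℝ) : ℝ :=
  sSup {r | ∃ x : κ → ℝ, pnorm p x ≤ 1 ∧ r = pnorm p (M.mulVec x)}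

/-- Diameter of a planar set with respect to the dual exponent `q`:
the smallest `Δ ≥ 0` with `ρ_Y(d) + ρ_Y(-d) ≤ ‖d‖_q * Δ` for all `d`. -/
def diamP (q : ℝ) (Y : Set (Fin 2 → ℝ)) : ℝ :=
  sInf {Δ | 0 ≤ Δ ∧ ∀ d : Fin 2 → ℝ, suppF Y d + suppF Y (-d) ≤ pnorm q d * Δ}

/-- The 2×2 block of `Φ` in block-row `i` and block-column `j`. -/
def blk {b : ℕ} (Φ : Matrix (Fin b × Fin 2) (Fin b × Fin 2) ℝ) (i j : Fin b) :
    Matrix (Fin 2) (Fin 2) ℝ := fun r c => Φ (i, r) (j, c)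

/-- The 2×n row-block of `Φ` formed by the rows of block `i`. -/
def rowBlk {b : ℕ} (Φ : Matrix (Fin b × Fin 2) (Fin b × Fin 2) ℝ) (i : Fin b) :
    Matrix (Fin 2) (Fin b × Fin 2) ℝ := fun r c => Φ (i, r) c

/-- Projection `π_i` onto the `i`-th block of coordinates. -/
def projB {b : ℕ} (i : Fin b) (x : Fin b × Fin 2 → ℝ) : Fin 2 → ℝ := fun r => x (i, r)

/-- Cartesian product of a family of planar sets, as a subset of `ℝⁿ` (`n = 2b`). -/
def prodSet {b : ℕ} (Xh : Fin b → Set (Fin 2 → ℝ)) : Set (Fin b × Fin 2 → ℝ) :=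
  {x | ∀ i, projB i x ∈ Xh i}

/-- Cartesian decomposition `D̂(X) = π₁X × ⋯ × π_b X`. -/
def cartD {b : ℕ} (X : Set (Fin b × Fin 2 → ℝ)) : Set (Fin b × Fin 2 → ℝ) :=
  prodSet (fun i => projB i '' X)

/-- Decomposed image: `X̂'_i = ⨁_j Φ_{ij} X̂_j`. -/
def dimg {b : ℕ} (Φ : Matrix (Fin b × Fin 2) (Fin b × Fin 2) ℝ)
    (Xh : Fin b → Set (Fin 2 → ℝ)) : Fin b → Set (Fin 2 → ℝ) :=
  fun i => ∑ j, mapSet (blk Φ i j) (Xh j)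

theorem projB_mulVec {b : ℕ} (Φ : Matrix (Fin b × Fin 2) (Fin b × Fin 2) ℝ)
    (x : Fin b × Fin 2 → ℝ) (i : Fin b) :
    projB i (Φ *ᵥ x) = ∑ j, blk Φ i j *ᵥ projB j x := by
  funext r
  simp only [projB, mulVec, dotProduct, blk, Fintype.sum_prod_type, Finset.sum_apply]

theorem mapSet_subset_prodSet_dimg_general {b : ℕ}
    (Φ : Matrix (Fin b × Fin 2) (Fin b × Fin 2) ℝ)
    (Xh : Fin b → Set (Fin 2 → ℝ)) :
    mapSet Φ (prodSet Xh) ⊆ prodSet (dimg Φ Xh) := by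
  rintro _ ⟨x, hx, rfl⟩ i
  rw [projB_mulVec]
  exact finsetSum_mem_finsetSum _ _ _ fun j _ => mem_image_of_mem _ (hx j)

/-- the image of a decomposed set `X̂ = X̂₁ × ⋯ × X̂_b` (with each `X̂_j`
nonempty, compact and convex) under `Φ` is contained in the decomposed image
`X̂' = X̂'₁ × ⋯ × X̂'_b`, `X̂'_i = ⨁_j Φ_{ij} X̂_j`. -/
theorem mapSet_subset_prodSet_dimg {b : ℕ}
    (Φ : Matrix (Fin b × Fin 2) (Fin b × Fin 2) ℝ)
    (Xh : Fin b → Set (Fin 2 → ℝ))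
    (hne : ∀ j, (Xh j).Nonempty) (hc : ∀ j, IsCompact (Xh j))
    (hconv : ∀ j, Convex ℝ (Xh j)) :
    mapSet Φ (prodSet Xh) ⊆ prodSet (dimg Φ Xh) :=
  mapSet_subset_prodSet_dimg_general Φ Xh

end
end

section
/- Let n = 2b, let Φ be an n×n real matrix, let X(0), V ⊆ ℝⁿ be nonempty sets, and define X(k+1) = Φ X(k) ⊕ V. For each j let X̂_j(0) ⊆ ℝ² satisfy π_j X(0) ⊆ X̂_j(0). Define, for i = 1, …, b, Ŵ_i(0) = {0} ⊆ ℝ², Ŵ_i(k+1) = Ŵ_i(k) ⊕ R_i(Φᵏ)·V, where R_i(Φᵏ) is the 2×n block-row of Φᵏ formed by rows 2i−1, 2i, and X̂_i(k) = (Φᵏ_{i1} X̂₁(0) ⊕ ⋯ ⊕ Φᵏ_{ib} X̂_b(0)) ⊕ Ŵ_i(k), where Φᵏ_{ij} is the (i,j) 2×2 block of Φᵏ. Then the decomposed recurrence is sound: X(k) ⊆ X̂₁(k) × ⋯ × X̂_b(k) for every k ≥ 0. -/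
open Set Pointwise Matrix

noncomputable section

/-! Unrolling `X(k+1) = Φ X(k) ⊕ V` gives `X(k) = Φᵏ X(0) ⊕ ⨁_{m<k} Φᵐ V` exactly. Projecting
onto block `i` turns `Φᵐ V` into `R_i(Φᵐ) V`, whose Minkowski sum over `m < k` is `Ŵ_i(k)`, and
maps `Φᵏ X(0)` into `⨁_j Φᵏ_{ij} π_j X(0)`, since `π_i (Φᵏ x) = ∑_j Φᵏ_{ij} π_j x`; the only loss
of precision is this last inclusion, which forgets the correlation between the blocks of `x`. -/

section MapSet

variable {ι κ μ : Type} [Fintype ι] [Fintype κ] [Fintype μ]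

lemma mapSet_eq_image_mulVecLin (M : Matrix ι κ ℝ) (S : Set (κ → ℝ)) :
    mapSet M S = M.mulVecLin '' S := rfl

lemma mapSet_add (M : Matrix ι κ ℝ) (S T : Set (κ → ℝ)) :
    mapSet M (S + T) = mapSet M S + mapSet M T := by
  simp only [mapSet_eq_image_mulVecLin, Set.image_add]

lemma mapSet_finsetSum {α : Type} (M : Matrix ι κ ℝ) (s : Finset α) (S : α → Set (κ → ℝ)) :
    mapSet M (∑ m ∈ s, S m) = ∑ m ∈ s, mapSet M (S m) := by
  simp only [mapSet_eq_image_mulVecLin, Set.image_finsetSum]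

lemma mapSet_mapSet (M : Matrix ι κ ℝ) (N : Matrix κ μ ℝ) (S : Set (μ → ℝ)) :
    mapSet M (mapSet N S) = mapSet (M * N) S := by
  simp only [mapSet, Set.image_image, Matrix.mulVec_mulVec]

lemma mapSet_one [DecidableEq ι] (S : Set (ι → ℝ)) : mapSet 1 S = S := by
  simp only [mapSet, Matrix.one_mulVec, Set.image_id']

lemma mapSet_mono (M : Matrix ι κ ℝ) {S T : Set (κ → ℝ)} (h : S ⊆ T) :
    mapSet M S ⊆ mapSet M T :=
  Set.image_mono h

end MapSet

lemma eq_mapSet_pow_add_sum_of_recurrence {ι : Type} [Fintype ι] [DecidableEq ι]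
    (Φ : Matrix ι ι ℝ) (X : ℕ → Set (ι → ℝ)) (V : Set (ι → ℝ))
    (hX : ∀ k, X (k + 1) = mapSet Φ (X k) + V) (k : ℕ) :
    X k = mapSet (Φ ^ k) (X 0) + ∑ m ∈ Finset.range k, mapSet (Φ ^ m) V := by
  induction k with
  | zero => simp only [pow_zero, mapSet_one, Finset.sum_range_zero, add_zero]
  | succ k ih =>
    rw [hX, ih, mapSet_add, mapSet_finsetSum, Finset.sum_range_succ', pow_zero, mapSet_one,
      mapSet_mapSet, ← pow_succ', add_assoc]
    simp only [mapSet_mapSet, ← pow_succ']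

section Blocks

variable {b : ℕ}

lemma projB_eq_funLeft (i : Fin b) : projB i = LinearMap.funLeft ℝ ℝ (Prod.mk i) := rfl

lemma image_projB_add (i : Fin b) (S T : Set (Fin b × Fin 2 → ℝ)) :
    projB i '' (S + T) = projB i '' S + projB i '' T := by
  simp only [projB_eq_funLeft, Set.image_add]

lemma image_projB_finsetSum {α : Type} (i : Fin b) (s : Finset α)
    (S : α → Set (Fin b × Fin 2 → ℝ)) :
    projB i '' (∑ m ∈ s, S m) = ∑ m ∈ s, projB i '' S m := by
  simp only [projB_eq_funLeft, Set.image_finsetSum]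

lemma image_projB_mapSet (i : Fin b) (M : Matrix (Fin b × Fin 2) (Fin b × Fin 2) ℝ)
    (S : Set (Fin b × Fin 2 → ℝ)) : projB i '' mapSet M S = mapSet (rowBlk M i) S := by
  simp only [mapSet, Set.image_image]
  rfl

lemma rowBlk_mulVec_eq_sum_blk_mulVec (i : Fin b) (M : Matrix (Fin b × Fin 2) (Fin b × Fin 2) ℝ)
    (x : Fin b × Fin 2 → ℝ) : rowBlk M i *ᵥ x = ∑ j, blk M i j *ᵥ projB j x := by
  funext r
  simp only [Finset.sum_apply, Matrix.mulVec, dotProduct, rowBlk, blk, projB]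
  exact Fintype.sum_prod_type _

lemma mapSet_rowBlk_subset_sum_blk (i : Fin b) (M : Matrix (Fin b × Fin 2) (Fin b × Fin 2) ℝ)
    (S : Set (Fin b × Fin 2 → ℝ)) :
    mapSet (rowBlk M i) S ⊆ ∑ j, mapSet (blk M i j) (projB j '' S) := by
  rintro _ ⟨x, hx, rfl⟩
  rw [rowBlk_mulVec_eq_sum_blk_mulVec]
  exact Set.finsetSum_mem_finsetSum _ _ _ fun j _ => ⟨projB j x, ⟨x, hx, rfl⟩, rfl⟩

end Blocks

theorem decomposed_recurrence_sound_constant_general {b : ℕ}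
    (Φ : Matrix (Fin b × Fin 2) (Fin b × Fin 2) ℝ)
    (X : ℕ → Set (Fin b × Fin 2 → ℝ)) (V : Set (Fin b × Fin 2 → ℝ))
    (hX : ∀ k, X (k + 1) = mapSet Φ (X k) + V)
    (Xh0 : Fin b → Set (Fin 2 → ℝ))
    (hXh0 : ∀ j, projB j '' X 0 ⊆ Xh0 j)
    (Wh : Fin b → ℕ → Set (Fin 2 → ℝ))
    (hWh0 : ∀ i, Wh i 0 = {0})
    (hWhs : ∀ i k, Wh i (k + 1) = Wh i k + mapSet (rowBlk (Φ ^ k) i) V)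
    (Xh : Fin b → ℕ → Set (Fin 2 → ℝ))
    (hXh : ∀ i k, Xh i k = (∑ j, mapSet (blk (Φ ^ k) i j) (Xh0 j)) + Wh i k) :
    ∀ k, X k ⊆ prodSet (fun i => Xh i k) := by
  intro k x hx i
  have hWh : Wh i k = ∑ m ∈ Finset.range k, mapSet (rowBlk (Φ ^ m) i) V :=
    (Finset.sum_range_induction _ _ (hWh0 i) k fun m _ => hWhs i m).symm
  have hproj : projB i '' X k ⊆ Xh i k := by
    rw [eq_mapSet_pow_add_sum_of_recurrence Φ X V hX k, image_projB_add, image_projB_finsetSum,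
      hXh, hWh]
    simp only [image_projB_mapSet]
    refine Set.add_subset_add ?_ subset_rfl
    exact (mapSet_rowBlk_subset_sum_blk i _ _).trans <|
      Set.finsetSum_subset_finsetSum _ _ _ fun j _ => mapSet_mono _ (hXh0 j)
  exact hproj ⟨x, hx, rfl⟩

/-- soundness of the decomposed recurrence with constant input set:
`X(k) ⊆ X̂₁(k) × ⋯ × X̂_b(k)` for every `k`, where
`Ŵ_i(k+1) = Ŵ_i(k) ⊕ R_i(Φᵏ)·V` and
`X̂_i(k) = (⨁_j Φᵏ_{ij} X̂_j(0)) ⊕ Ŵ_i(k)`. -/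
theorem decomposed_recurrence_sound_constant {b : ℕ}
    (Φ : Matrix (Fin b × Fin 2) (Fin b × Fin 2) ℝ)
    (X : ℕ → Set (Fin b × Fin 2 → ℝ)) (V : Set (Fin b × Fin 2 → ℝ))
    (hX0ne : (X 0).Nonempty) (hVne : V.Nonempty)
    (hX : ∀ k, X (k + 1) = mapSet Φ (X k) + V)
    (Xh0 : Fin b → Set (Fin 2 → ℝ))
    (hXh0 : ∀ j, projB j '' X 0 ⊆ Xh0 j)
    (Wh : Fin b → ℕ → Set (Fin 2 → ℝ))
    (hWh0 : ∀ i, Wh i 0 = {0})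
    (hWhs : ∀ i k, Wh i (k + 1) = Wh i k + mapSet (rowBlk (Φ ^ k) i) V)
    (Xh : Fin b → ℕ → Set (Fin 2 → ℝ))
    (hXh : ∀ i k, Xh i k = (∑ j, mapSet (blk (Φ ^ k) i j) (Xh0 j)) + Wh i k) :
    ∀ k, X k ⊆ prodSet (fun i => Xh i k) :=
  decomposed_recurrence_sound_constant_general Φ X V hX Xh0 hXh0 Wh hWh0 hWhs Xh hXh

end
end
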